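/- Let σ₁ = σ(v₁,v₂) and σ₂ = σ(w₁,w₂) be lattice cones with primitive generators in ℤ², with associated matrices A_{σ₁} (columns v₁,v₂) and A_{σ₂} (columns w₁,w₂). If there exists A ∈ GL₂(ℤ) with A·A_{σ₁} = A_{σ₂}, then Todd_{σ₁}(x₁,x₂) = Todd_{σ₂}(x₁,x₂) as formal power series in ℂ[[x₁,x₂]]. -/

import Mathlib

/-!
The matrix `A` maps `M_{σ₁} = ℤv₁ + ℤv₂` onto `M_{σ₂} = ℤw₁ + ℤw₂`, so `m ↦ A m` induces an
isomorphism `Γ_{σ₁} ≅ Γ_{σ₂}`. The coordinates of `m` in the basis `v₁, v₂` are those of `A m` in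
the basis `A v₁, A v₂` (both are quotients of `2 × 2` determinants, and `A` multiplies every such
determinant by `det A`), so the characters `χ_{σ,i}` correspond and the two sums agree termwise.
-/

noncomputable section

/-- The twisted Todd series `Todd^λ(S) = S/(1 − λ·e^{−S}) ∈ ℂ[[S]]`.
For `λ = 1` it is the inverse of the power series `(1 − e^{−S})/S` (constant term 1);
for `λ ≠ 1` the series `1 − λe^{−S}` is invertible (constant term `1 − λ`). -/
def ToddPS (l : ℂ) : PowerSeries ℂ :=
  if l = 1 then (PowerSeries.mk fun n => ((-1) ^ n / (n + 1).factorial : ℂ))⁻¹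
  else PowerSeries.X * (1 - l • PowerSeries.mk fun n => ((-1) ^ n / n.factorial : ℂ))⁻¹

/-- `L^λ(S) := Todd^λ(S) − S/2`. -/
def LPS (l : ℂ) : PowerSeries ℂ := ToddPS l - PowerSeries.C (R := ℂ) (1 / 2) * PowerSeries.X

/-- Substitution of the linear form `c·x₁ + d·x₂` into a univariate power series:
the coefficient of `x₁^{e₀}x₂^{e₁}` of `f(c·x₁ + d·x₂)` is
`coeff_{e₀+e₁}(f)·binom(e₀+e₁,e₀)·c^{e₀}d^{e₁}`. -/
def substLin (c d : ℂ) (f : PowerSeries ℂ) : MvPowerSeries (Fin 2) ℂ :=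
  fun e => (PowerSeries.coeff (R := ℂ) (e 0 + e 1) f) * ((e 0 + e 1).choose (e 0) : ℂ) *
    c ^ (e 0) * d ^ (e 1)

/-- For a lift `m` of `g ∈ Γ_σ = ℤ²/(ℤw₁+ℤw₂)`, writing `m = a₁w₁ + a₂w₂` with
`a₁, a₂ ∈ ℚ` (Cramer's rule), `χ_{σ,1}(g) = e^{2πi·a₁}`. -/
def char1 (w₁ w₂ m : ℤ × ℤ) : ℂ :=
  Complex.exp (2 * Real.pi * Complex.I *
    (((m.1 * w₂.2 - m.2 * w₂.1 : ℤ) : ℂ) / ((w₁.1 * w₂.2 - w₁.2 * w₂.1 : ℤ) : ℂ)))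

/-- As `char1`, for the second coordinate: `χ_{σ,2}(g) = e^{2πi·a₂}`. -/
def char2 (w₁ w₂ m : ℤ × ℤ) : ℂ :=
  Complex.exp (2 * Real.pi * Complex.I *
    (((w₁.1 * m.2 - w₁.2 * m.1 : ℤ) : ℂ) / ((w₁.1 * w₂.2 - w₁.2 * w₂.1 : ℤ) : ℂ)))

/-- The Todd series of the lattice cone `σ(w₁,w₂)`:
`Todd_σ(x₁,x₂) := Σ_{g∈Γ_σ} Todd^{χ_{σ,1}(g)}(x₁)·Todd^{χ_{σ,2}(g)}(x₂)`. -/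
def ToddCone (w₁ w₂ : ℤ × ℤ) : MvPowerSeries (Fin 2) ℂ :=
  ∑ᶠ g : (ℤ × ℤ) ⧸ Submodule.span ℤ {w₁, w₂},
    substLin 1 0 (ToddPS (char1 w₁ w₂ g.out)) * substLin 0 1 (ToddPS (char2 w₁ w₂ g.out))

/-- `L_σ(x₁,x₂) := Σ_{g∈Γ_σ} L^{χ_{σ,1}(g)}(x₁)·L^{χ_{σ,2}(g)}(x₂)`. -/
def LCone (w₁ w₂ : ℤ × ℤ) : MvPowerSeries (Fin 2) ℂ :=
  ∑ᶠ g : (ℤ × ℤ) ⧸ Submodule.span ℤ {w₁, w₂},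
    substLin 1 0 (LPS (char1 w₁ w₂ g.out)) * substLin 0 1 (LPS (char2 w₁ w₂ g.out))

/-- A lattice vector is primitive if it is not an integer multiple `≥ 2`
of another lattice vector. -/
def IsPrimitiveVec (v : ℤ × ℤ) : Prop := ∀ (n : ℕ) (w : ℤ × ℤ), v = (n : ℤ) • w → n = 1

open Complex

def cross (u v : ℤ × ℤ) : ℤ := u.1 * v.2 - u.2 * v.1

lemma char1_eq_exp_cross (w₁ w₂ m : ℤ × ℤ) :
    char1 w₁ w₂ m = cexp (2 * Real.pi * I * ((cross m w₂ : ℂ) / (cross w₁ w₂ : ℂ))) := rfl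

lemma char2_eq_exp_cross (w₁ w₂ m : ℤ × ℤ) :
    char2 w₁ w₂ m = cexp (2 * Real.pi * I * ((cross w₁ m : ℂ) / (cross w₁ w₂ : ℂ))) := rfl

lemma exp_two_pi_I_mul_int_div_eq {p p' D x : ℤ} (h : p = p' + x * D) :
    cexp (2 * Real.pi * I * ((p : ℂ) / D)) = cexp (2 * Real.pi * I * ((p' : ℂ) / D)) := by
  rcases eq_or_ne D 0 with rfl | hD
  · rw [h, mul_zero, add_zero]
  have hD' : (D : ℂ) ≠ 0 := Int.cast_ne_zero.mpr hD
  have harg : 2 * Real.pi * I * ((p : ℂ) / D) =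
      2 * Real.pi * I * ((p' : ℂ) / D) + x * (2 * Real.pi * I) := by
    field_simp
    push_cast [h]
    ring
  rw [harg, exp_add, exp_int_mul_two_pi_mul_I, mul_one]

section Coset

variable {w₁ w₂ m m' : ℤ × ℤ}

lemma char1_eq_of_sub_mem_span (h : m - m' ∈ Submodule.span ℤ {w₁, w₂}) :
    char1 w₁ w₂ m = char1 w₁ w₂ m' := by
  obtain ⟨x, y, hxy⟩ := Submodule.mem_span_pair.mp h
  have h1 : x * w₁.1 + y * w₂.1 = m.1 - m'.1 := congrArg Prod.fst hxy
  have h2 : x * w₁.2 + y * w₂.2 = m.2 - m'.2 := congrArg Prod.snd hxy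
  rw [char1_eq_exp_cross, char1_eq_exp_cross]
  exact exp_two_pi_I_mul_int_div_eq (x := x)
    (by unfold cross; linear_combination w₂.1 * h2 - w₂.2 * h1)

lemma char2_eq_of_sub_mem_span (h : m - m' ∈ Submodule.span ℤ {w₁, w₂}) :
    char2 w₁ w₂ m = char2 w₁ w₂ m' := by
  obtain ⟨x, y, hxy⟩ := Submodule.mem_span_pair.mp h
  have h1 : x * w₁.1 + y * w₂.1 = m.1 - m'.1 := congrArg Prod.fst hxy
  have h2 : x * w₁.2 + y * w₂.2 = m.2 - m'.2 := congrArg Prod.snd hxy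
  rw [char2_eq_exp_cross, char2_eq_exp_cross]
  exact exp_two_pi_I_mul_int_div_eq (x := y)
    (by unfold cross; linear_combination w₁.2 * h1 - w₁.1 * h2)

end Coset

namespace Matrix

variable (A : Matrix (Fin 2) (Fin 2) ℤ)

def mulVecProd (m : ℤ × ℤ) : ℤ × ℤ := (A 0 0 * m.1 + A 0 1 * m.2, A 1 0 * m.1 + A 1 1 * m.2)

lemma cross_mulVecProd (u v : ℤ × ℤ) :
    cross (A.mulVecProd u) (A.mulVecProd v) = A.det * cross u v := by
  simp only [cross, mulVecProd, det_fin_two]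
  ring

variable {A}

lemma char1_mulVecProd (hA : A.det ≠ 0) (v₁ v₂ m : ℤ × ℤ) :
    char1 (A.mulVecProd v₁) (A.mulVecProd v₂) (A.mulVecProd m) = char1 v₁ v₂ m := by
  simp only [char1_eq_exp_cross, cross_mulVecProd, Int.cast_mul]
  rw [mul_div_mul_left _ _ (Int.cast_ne_zero.mpr hA)]

lemma char2_mulVecProd (hA : A.det ≠ 0) (v₁ v₂ m : ℤ × ℤ) :
    char2 (A.mulVecProd v₁) (A.mulVecProd v₂) (A.mulVecProd m) = char2 v₁ v₂ m := by
  simp only [char2_eq_exp_cross, cross_mulVecProd, Int.cast_mul]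
  rw [mul_div_mul_left _ _ (Int.cast_ne_zero.mpr hA)]

def prodLinearEquivOfIsUnitDet (hA : IsUnit A.det) : (ℤ × ℤ) ≃ₗ[ℤ] ℤ × ℤ :=
  (LinearEquiv.finTwoArrow ℤ ℤ).symm ≪≫ₗ A.toLinearEquiv' (A.invertibleOfIsUnitDet hA) ≪≫ₗ
    LinearEquiv.finTwoArrow ℤ ℤ

@[simp]
lemma coe_prodLinearEquivOfIsUnitDet (hA : IsUnit A.det) :
    ⇑(A.prodLinearEquivOfIsUnitDet hA) = A.mulVecProd := by
  ext m <;> simp [prodLinearEquivOfIsUnitDet, mulVecProd, toLinearEquiv']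

end Matrix

lemma Submodule.Quotient.apply_out_sub_equiv_out_mem {R M N : Type*} [Ring R] [AddCommGroup M]
    [Module R M] [AddCommGroup N] [Module R N] (P : Submodule R M) (Q : Submodule R N)
    (f : M ≃ₗ[R] N) (hf : P.map (f : M →ₗ[R] N) = Q) (g : M ⧸ P) :
    f g.out - (Submodule.Quotient.equiv P Q f hf g).out ∈ Q := by
  rw [← Submodule.Quotient.eq, Submodule.Quotient.mk_out]
  conv_rhs => rw [← Submodule.Quotient.mk_out g]
  rfl

theorem toddCone_mulVecProd {A : Matrix (Fin 2) (Fin 2) ℤ} (hA : IsUnit A.det) (v₁ v₂ : ℤ × ℤ) :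
    ToddCone (A.mulVecProd v₁) (A.mulVecProd v₂) = ToddCone v₁ v₂ := by
  have hspan : (Submodule.span ℤ {v₁, v₂}).map
      (A.prodLinearEquivOfIsUnitDet hA : (ℤ × ℤ) →ₗ[ℤ] ℤ × ℤ) =
      Submodule.span ℤ {A.mulVecProd v₁, A.mulVecProd v₂} := by
    rw [Submodule.map_span, LinearEquiv.coe_coe, Set.image_pair,
      Matrix.coe_prodLinearEquivOfIsUnitDet]
  let ψ := Submodule.Quotient.equiv _ _ _ hspan
  refine (finsum_eq_of_bijective ψ ψ.bijective fun g => ?_).symm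
  have hmem := Submodule.Quotient.apply_out_sub_equiv_out_mem _ _ _ hspan g
  rw [Matrix.coe_prodLinearEquivOfIsUnitDet] at hmem
  have hdet : A.det ≠ 0 := hA.ne_zero
  rw [← char1_eq_of_sub_mem_span hmem, ← char2_eq_of_sub_mem_span hmem,
    Matrix.char1_mulVecProd hdet, Matrix.char2_mulVecProd hdet]

theorem stmt_4_general (v₁ v₂ w₁ w₂ : ℤ × ℤ)
    (A : Matrix (Fin 2) (Fin 2) ℤ) (hA : IsUnit A.det)
    (hAA : A * !![v₁.1, v₂.1; v₁.2, v₂.2] = !![w₁.1, w₂.1; w₁.2, w₂.2]) :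
    ToddCone v₁ v₂ = ToddCone w₁ w₂ := by
  have hw : A.mulVecProd v₁ = w₁ ∧ A.mulVecProd v₂ = w₂ := by
    have h := fun i j => congrFun (congrFun hAA i) j
    simp only [Matrix.mul_apply, Matrix.of_apply, Matrix.cons_val', Matrix.cons_val_fin_one,
      Fin.sum_univ_two, Matrix.cons_val_zero, Matrix.cons_val_one, Fin.forall_fin_two] at h
    obtain ⟨⟨h₁₁, h₁₂⟩, h₂₁, h₂₂⟩ := h
    exact ⟨Prod.ext h₁₁ h₂₁, Prod.ext h₁₂ h₂₂⟩
  rw [← hw.1, ← hw.2, toddCone_mulVecProd hA]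

theorem stmt_4 (v₁ v₂ w₁ w₂ : ℤ × ℤ)
    (hprimv₁ : IsPrimitiveVec v₁) (hprimv₂ : IsPrimitiveVec v₂)
    (hprimw₁ : IsPrimitiveVec w₁) (hprimw₂ : IsPrimitiveVec w₂)
    (hindepv : v₁.1 * v₂.2 - v₁.2 * v₂.1 ≠ 0) (hindepw : w₁.1 * w₂.2 - w₁.2 * w₂.1 ≠ 0)
    (A : Matrix (Fin 2) (Fin 2) ℤ) (hA : IsUnit A.det)
    (hAA : A * !![v₁.1, v₂.1; v₁.2, v₂.2] = !![w₁.1, w₂.1; w₁.2, w₂.2]) :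
    ToddCone v₁ v₂ = ToddCone w₁ w₂ :=
  stmt_4_general v₁ v₂ w₁ w₂ A hA hAA

end
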